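/- arXiv:1711.08411 — 5 statements merged into one kernel-verified Lean document; each statement's English description precedes it below -/
import Mathlib

section
/- Let ℓ_1 > ℓ_2 > ... > ℓ_n > 0 be distinct positive reals and p > n positive integers. Define λ̂¹_a = (1/n)(ℓ_a - ∑_{b=1}^n (ℓ_a - ℓ_b)/ψ_{a,b}) for a = 1,...,n, where ψ_{a,b} = p + n(ℓ_a - ℓ_b)²/(ℓ_a ℓ_b). Then λ̂¹_1 > λ̂¹_2 > ... > λ̂¹_n > 0. -/
/-- Key Lipschitz-type bound: the map `x ↦ (x-c)/(p + m(x-c)²/(xc))` moves points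
at most `1/p` times as far apart. -/
lemma key_lip (p m x y c : ℝ) (hp : 0 < p) (hm : 0 ≤ m) (hc : 0 < c)
    (hy : 0 < y) (hxy : y < x) :
    (x - c) / (p + m * (x - c) ^ 2 / (x * c)) -
      (y - c) / (p + m * (y - c) ^ 2 / (y * c)) ≤ (x - y) / p := by
  have hx : 0 < x := hy.trans hxy
  have hxc : 0 < x * c := mul_pos hx hc
  have hyc : 0 < y * c := mul_pos hy hc
  have hA : 0 < p * (x * c) + m * (x - c) ^ 2 := by
    have := mul_nonneg hm (sq_nonneg (x - c)); nlinarith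
  have hB : 0 < p * (y * c) + m * (y - c) ^ 2 := by
    have := mul_nonneg hm (sq_nonneg (y - c)); nlinarith
  have e1 : p + m * (x - c) ^ 2 / (x * c) = (p * (x * c) + m * (x - c) ^ 2) / (x * c) := by
    field_simp
  have e2 : p + m * (y - c) ^ 2 / (y * c) = (p * (y * c) + m * (y - c) ^ 2) / (y * c) := by
    field_simp
  rw [e1, e2, div_div_eq_mul_div, div_div_eq_mul_div,
    div_sub_div _ _ hA.ne' hB.ne', div_le_div_iff₀ (mul_pos hA hB) hp]
  have hamgm : 0 ≤ x ^ 2 * y + x * y ^ 2 + c ^ 3 - 3 * x * y * c := by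
    nlinarith [sq_nonneg (x - c), sq_nonneg (y - c), sq_nonneg (x + y - 2 * c),
      mul_pos hx hy, mul_pos hx hc, mul_pos hy hc]
  have h1 : 0 ≤ m ^ 2 * (x - y) * ((x - c) * (y - c)) ^ 2 :=
    mul_nonneg (mul_nonneg (sq_nonneg m) (by linarith)) (sq_nonneg _)
  have h2 : 0 ≤ p * m * c * (x - y) * (x ^ 2 * y + x * y ^ 2 + c ^ 3 - 3 * x * y * c) :=
    mul_nonneg (mul_nonneg (mul_nonneg (mul_nonneg hp.le hm) hc.le) (by linarith)) hamgm
  nlinarith [h1, h2]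

/-- Each summand is bounded: `(x-c)/ψ < x/p`. -/
lemma key_bound (p m x c : ℝ) (hp : 0 < p) (hm : 0 ≤ m) (hx : 0 < x) (hc : 0 < c) :
    (x - c) / (p + m * (x - c) ^ 2 / (x * c)) < x / p := by
  have hxc : 0 < x * c := mul_pos hx hc
  have hψp : p ≤ p + m * (x - c) ^ 2 / (x * c) := by
    have : 0 ≤ m * (x - c) ^ 2 / (x * c) :=
      div_nonneg (mul_nonneg hm (sq_nonneg _)) hxc.le
    linarith
  have hψ : 0 < p + m * (x - c) ^ 2 / (x * c) := lt_of_lt_of_le hp hψp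
  rcases le_or_gt x c with h | h
  · calc (x - c) / (p + m * (x - c) ^ 2 / (x * c)) ≤ 0 :=
          div_nonpos_of_nonpos_of_nonneg (by linarith) hψ.le
      _ < x / p := div_pos hx hp
  · calc (x - c) / (p + m * (x - c) ^ 2 / (x * c)) ≤ (x - c) / p :=
          div_le_div_of_nonneg_left (by linarith) hp hψp
      _ < x / p := by
          rw [div_lt_div_iff₀ hp hp]; nlinarith

/-- The approximate estimates `λ̂¹_a` are strictly decreasing and positive. -/
theorem stmt_1 (n p : ℕ) (hn : 1 ≤ n) (hnp : n < p) (ℓ : ℕ → ℝ)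
    (hpos : ∀ a < n, 0 < ℓ a)
    (hdec : ∀ a b, a < b → b < n → ℓ b < ℓ a)
    (ψ : ℕ → ℕ → ℝ)
    (hψ : ∀ a b, ψ a b = (p : ℝ) + n * (ℓ a - ℓ b) ^ 2 / (ℓ a * ℓ b))
    (lam1 : ℕ → ℝ)
    (hlam1 : ∀ a, lam1 a = (1 / (n : ℝ)) * (ℓ a - ∑ b ∈ Finset.range n, (ℓ a - ℓ b) / ψ a b)) :
    (∀ a b, a < b → b < n → lam1 b < lam1 a) ∧ (∀ a < n, 0 < lam1 a) := by
  have hp0 : 0 < p := lt_of_le_of_lt (Nat.zero_le n) hnp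
  have hp : (0 : ℝ) < p := by exact_mod_cast hp0
  have hnR : (0 : ℝ) < n := by exact_mod_cast hn
  have hnpR : (n : ℝ) < p := by exact_mod_cast hnp
  constructor
  · intro a b hab hbn
    have han : a < n := hab.trans hbn
    have hx : 0 < ℓ a := hpos a han
    have hy : 0 < ℓ b := hpos b hbn
    have hxy : ℓ b < ℓ a := hdec a b hab hbn
    have hterm : ∀ c ∈ Finset.range n,
        (ℓ a - ℓ c) / ψ a c - (ℓ b - ℓ c) / ψ b c ≤ (ℓ a - ℓ b) / p := by
      intro c hc
      rw [hψ, hψ]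
      exact key_lip p n (ℓ a) (ℓ b) (ℓ c) hp (by positivity)
        (hpos c (Finset.mem_range.1 hc)) hy hxy
    have hsum2 : (∑ c ∈ Finset.range n, (ℓ a - ℓ c) / ψ a c)
        - ∑ c ∈ Finset.range n, (ℓ b - ℓ c) / ψ b c ≤ n * ((ℓ a - ℓ b) / p) := by
      rw [← Finset.sum_sub_distrib]
      calc ∑ c ∈ Finset.range n, ((ℓ a - ℓ c) / ψ a c - (ℓ b - ℓ c) / ψ b c)
          ≤ ∑ _c ∈ Finset.range n, (ℓ a - ℓ b) / p := Finset.sum_le_sum hterm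
        _ = n * ((ℓ a - ℓ b) / p) := by
            rw [Finset.sum_const, Finset.card_range, nsmul_eq_mul]
    have hkey : (n : ℝ) * ((ℓ a - ℓ b) / p) < ℓ a - ℓ b := by
      have e : (n : ℝ) * ((ℓ a - ℓ b) / p) * p = n * (ℓ a - ℓ b) := by field_simp
      nlinarith [mul_pos (sub_pos.2 hxy) hp]
    rw [hlam1 a, hlam1 b]
    have hmain : ℓ b - ∑ c ∈ Finset.range n, (ℓ b - ℓ c) / ψ b c
        < ℓ a - ∑ c ∈ Finset.range n, (ℓ a - ℓ c) / ψ a c := by linarith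
    exact mul_lt_mul_of_pos_left hmain (by positivity)
  · intro a han
    have hx : 0 < ℓ a := hpos a han
    have hterm : ∀ c ∈ Finset.range n, (ℓ a - ℓ c) / ψ a c < ℓ a / p := by
      intro c hc
      rw [hψ]
      exact key_bound p n (ℓ a) (ℓ c) hp (by positivity) hx (hpos c (Finset.mem_range.1 hc))
    have hsum : ∑ c ∈ Finset.range n, (ℓ a - ℓ c) / ψ a c
        < ∑ _c ∈ Finset.range n, ℓ a / p :=
      Finset.sum_lt_sum_of_nonempty (Finset.nonempty_range_iff.2 (by omega)) hterm
    rw [Finset.sum_const, Finset.card_range, nsmul_eq_mul] at hsum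
    have hkey : (n : ℝ) * (ℓ a / p) < ℓ a := by
      have e : (n : ℝ) * (ℓ a / p) * p = n * ℓ a := by field_simp
      nlinarith [mul_pos hx hp]
    rw [hlam1]
    exact mul_pos (by positivity) (by linarith)
end

section
/- Let Λ = diag(λ_1,...,λ_p) with λ_i > 0, and L = diag(ℓ_1,...,ℓ_n) with ℓ_i ≥ 0, n ≤ p. For any real p×n matrix A with AᵀA = I_n, one has tr(Λ⁻¹ A L Aᵀ) ≥ ∑_{i=1}^n ℓ_i/λ_i, provided λ_1 ≥ λ_2 ≥ ... ≥ λ_p and ℓ_1 ≥ ℓ_2 ≥ ... ≥ ℓ_n. -/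
open Matrix Finset

/-- Abel-summation positivity: if weights are nonneg and decreasing and all partial
sums of `h` are nonneg, then the weighted sum is nonneg. -/
lemma abel_pos (n : ℕ) (w h : ℕ → ℝ) (hw0 : ∀ i, i < n → 0 ≤ w i)
    (hwdec : ∀ i, i + 1 < n → w (i + 1) ≤ w i)
    (hpart : ∀ k, k < n → 0 ≤ ∑ i ∈ Finset.range (k + 1), h i) :
    0 ≤ ∑ i ∈ Finset.range n, w i * h i := by
  rcases Nat.eq_zero_or_pos n with hn | hn
  · simp [hn]
  have hby := Finset.sum_range_by_parts w h n
  simp only [smul_eq_mul] at hby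
  rw [hby]
  have h1 : 0 ≤ w (n - 1) * ∑ i ∈ range n, h i := by
    apply mul_nonneg (hw0 _ (Nat.sub_lt hn one_pos))
    have h := hpart (n - 1) (Nat.sub_lt hn one_pos)
    have hn1 : n - 1 + 1 = n := by omega
    rwa [hn1] at h
  have h2 : ∑ i ∈ range (n - 1), (w (i + 1) - w i) * ∑ j ∈ range (i + 1), h j ≤ 0 := by
    apply Finset.sum_nonpos
    intro i hi
    rw [Finset.mem_range] at hi
    have hi' : i + 1 < n := by omega
    exact mul_nonpos_of_nonpos_of_nonneg (by linarith [hwdec i hi']) (hpart i (by omega))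
  linarith

/-- Rearrangement-type bound: if `r i ∈ [0,1]` with total sum `m = t+1`, and `μ` is
monotone nondecreasing, then the sum of the `m` smallest values of `μ` is at most
`∑ μ i * r i`. -/
lemma smallest_le (p : ℕ) (μ : Fin p → ℝ) (hμ : ∀ i j : Fin p, i ≤ j → μ i ≤ μ j)
    (r : Fin p → ℝ) (hr0 : ∀ i, 0 ≤ r i) (hr1 : ∀ i, r i ≤ 1) (t : Fin p)
    (hsum : ∑ i, r i = (t : ℕ) + 1) :
    ∑ i ∈ Finset.Iic t, μ i ≤ ∑ i, μ i * r i := by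
  classical
  have hsplit : ∑ i ∈ filter (fun i => i ≤ t) univ, μ i * r i
      + ∑ i ∈ filter (fun i => ¬ i ≤ t) univ, μ i * r i = ∑ i, μ i * r i :=
    Finset.sum_filter_add_sum_filter_not _ _ _
  have hS : Finset.Iic t = filter (fun i => i ≤ t) univ := by
    ext i; simp
  have hcard : ((Finset.Iic t).card : ℝ) = (t : ℕ) + 1 := by
    rw [Fin.card_Iic]; push_cast; ring
  -- bound on S
  have h1 : ∑ i ∈ Finset.Iic t, μ i * (1 - r i) ≤ ∑ i ∈ Finset.Iic t, μ t * (1 - r i) := by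
    apply Finset.sum_le_sum
    intro i hi
    rw [Finset.mem_Iic] at hi
    exact mul_le_mul_of_nonneg_right (hμ _ _ hi) (by linarith [hr1 i])
  have h2 : ∑ i ∈ filter (fun i => ¬ i ≤ t) univ, μ t * r i
      ≤ ∑ i ∈ filter (fun i => ¬ i ≤ t) univ, μ i * r i := by
    apply Finset.sum_le_sum
    intro i hi
    rw [Finset.mem_filter] at hi
    exact mul_le_mul_of_nonneg_right (hμ _ _ (le_of_not_ge hi.2)) (hr0 i)
  have hsum2 : ∑ i ∈ Finset.Iic t, r i
      + ∑ i ∈ filter (fun i => ¬ i ≤ t) univ, r i = (t : ℕ) + 1 := by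
    rw [hS, Finset.sum_filter_add_sum_filter_not, hsum]
  have e1 : ∑ i ∈ Finset.Iic t, μ i * (1 - r i)
      = ∑ i ∈ Finset.Iic t, μ i - ∑ i ∈ Finset.Iic t, μ i * r i := by
    rw [← Finset.sum_sub_distrib]
    congr 1; ext i; ring
  have e2 : ∑ i ∈ Finset.Iic t, μ t * (1 - r i)
      = μ t * (((Finset.Iic t).card : ℝ) - ∑ i ∈ Finset.Iic t, r i) := by
    rw [← Finset.mul_sum, Finset.sum_sub_distrib, Finset.sum_const, nsmul_eq_mul, mul_one]
  have e3 : ∑ i ∈ filter (fun i => ¬ i ≤ t) univ, μ t * r i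
      = μ t * ∑ i ∈ filter (fun i => ¬ i ≤ t) univ, r i := (Finset.mul_sum _ _ _).symm
  rw [e1, e2] at h1
  rw [e3] at h2
  rw [← hsplit, ← hS]
  rw [hcard] at h1
  have e4 : ((t : ℕ) + 1 : ℝ) - ∑ i ∈ Finset.Iic t, r i
      = ∑ i ∈ filter (fun i => ¬ i ≤ t) univ, r i := by linarith [hsum2]
  rw [e4] at h1
  linarith [h1, h2]

/-- Key partial-sum inequality for a doubly substochastic matrix `B`. -/
lemma key_partial (n p : ℕ) (hnp : n ≤ p) (μ : Fin p → ℝ)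
    (hμ : ∀ i j : Fin p, i ≤ j → μ i ≤ μ j)
    (B : Fin p → Fin n → ℝ) (hB0 : ∀ i j, 0 ≤ B i j)
    (hcol : ∀ j, ∑ i, B i j = 1) (hrow : ∀ i, ∑ j, B i j ≤ 1) (k : Fin n) :
    ∑ j ∈ Finset.Iic k, μ (Fin.castLE hnp j) ≤ ∑ j ∈ Finset.Iic k, ∑ i, μ i * B i j := by
  classical
  set t : Fin p := Fin.castLE hnp k with ht
  set r : Fin p → ℝ := fun i => ∑ j ∈ Finset.Iic k, B i j with hr
  have hswap : ∑ j ∈ Finset.Iic k, ∑ i, μ i * B i j = ∑ i, μ i * r i := by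
    rw [Finset.sum_comm]
    congr 1; ext i; rw [hr, Finset.mul_sum]
  have hr0 : ∀ i, 0 ≤ r i := fun i => Finset.sum_nonneg fun j _ => hB0 i j
  have hr1 : ∀ i, r i ≤ 1 := by
    intro i
    calc r i ≤ ∑ j, B i j :=
          Finset.sum_le_sum_of_subset_of_nonneg (Finset.subset_univ _)
            (fun j _ _ => hB0 i j)
      _ ≤ 1 := hrow i
  have hsum : ∑ i, r i = (t : ℕ) + 1 := by
    rw [hr]
    rw [Finset.sum_comm]
    have : ∀ j ∈ Finset.Iic k, ∑ i, B i j = 1 := fun j _ => hcol j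
    rw [Finset.sum_congr rfl this, Finset.sum_const, Fin.card_Iic]
    push_cast [ht]
    simp [Fin.castLE]
  have hLHS : ∑ j ∈ Finset.Iic k, μ (Fin.castLE hnp j) = ∑ i ∈ Finset.Iic t, μ i := by
    apply Finset.sum_nbij' (fun j => Fin.castLE hnp j)
      (fun i => ⟨min (i : ℕ) (k : ℕ), lt_of_le_of_lt (min_le_right _ _) k.isLt⟩)
    · intro a ha
      rw [Finset.mem_Iic] at ha ⊢
      rw [ht, Fin.le_def] at *
      simpa using ha
    · intro a _
      rw [Finset.mem_Iic, Fin.le_def]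
      simp
    · intro a ha
      rw [Finset.mem_Iic, Fin.le_def] at ha
      apply Fin.ext
      simpa using ha
    · intro a ha
      rw [Finset.mem_Iic, ht, Fin.le_def] at ha
      apply Fin.ext
      simpa using ha
    · intro a _
      rfl
  rw [hswap, hLHS]
  exact smallest_le p μ hμ r hr0 hr1 t hsum

/-- Trace inequality: `tr(Λ⁻¹ A L Aᵀ) ≥ ∑ ℓ_i/λ_i` for `A` with orthonormal columns. -/
theorem stmt_5 (n p : ℕ) (hnp : n ≤ p)
    (lam : Fin p → ℝ) (hlampos : ∀ i, 0 < lam i)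
    (hlamdec : ∀ i j : Fin p, i ≤ j → lam j ≤ lam i)
    (ℓ : Fin n → ℝ) (hℓnonneg : ∀ i, 0 ≤ ℓ i)
    (hℓdec : ∀ i j : Fin n, i ≤ j → ℓ j ≤ ℓ i)
    (A : Matrix (Fin p) (Fin n) ℝ) (hA : Aᵀ * A = 1) :
    ∑ i : Fin n, ℓ i / lam (Fin.castLE hnp i) ≤
      (Matrix.diagonal (fun i => (lam i)⁻¹) * A * Matrix.diagonal ℓ * Aᵀ).trace := by
  classical
  set μ : Fin p → ℝ := fun i => (lam i)⁻¹ with hμdef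
  set B : Fin p → Fin n → ℝ := fun i j => (A i j) ^ 2 with hBdef
  have hμ : ∀ i j : Fin p, i ≤ j → μ i ≤ μ j := by
    intro i j hij
    exact inv_anti₀ (hlampos j) (hlamdec i j hij)
  have hB0 : ∀ i j, 0 ≤ B i j := fun i j => sq_nonneg _
  have hcol : ∀ j, ∑ i, B i j = 1 := by
    intro j
    have h := congrFun (congrFun hA j) j
    simp only [Matrix.mul_apply, Matrix.transpose_apply, Matrix.one_apply_eq] at h
    rw [← h]
    apply Finset.sum_congr rfl
    intro i _
    rw [hBdef]; ring
  have hrow : ∀ i, ∑ j, B i j ≤ 1 := by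
    intro i
    have hP : A * Aᵀ * (A * Aᵀ) = A * Aᵀ := by
      rw [Matrix.mul_assoc, ← Matrix.mul_assoc Aᵀ, hA, Matrix.one_mul]
    have hPe : ∀ a b, (A * Aᵀ) a b = ∑ j, A a j * A b j := by
      intro a b; simp [Matrix.mul_apply, Matrix.transpose_apply]
    have hPsymm : ∀ a b, (A * Aᵀ) a b = (A * Aᵀ) b a := by
      intro a b; rw [hPe, hPe]
      apply Finset.sum_congr rfl; intro j _; ring
    have hii : (A * Aᵀ) i i = ∑ k, ((A * Aᵀ) i k) ^ 2 := by
      conv_lhs => rw [← hP]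
      rw [Matrix.mul_apply]
      apply Finset.sum_congr rfl
      intro k _
      rw [← hPsymm]; ring
    have hs : (A * Aᵀ) i i = ∑ j, B i j := by
      rw [hPe]
      apply Finset.sum_congr rfl
      intro j _; rw [hBdef]; ring
    have h1 : ((A * Aᵀ) i i) ^ 2 ≤ (A * Aᵀ) i i := by
      calc ((A * Aᵀ) i i) ^ 2 ≤ ∑ k, ((A * Aᵀ) i k) ^ 2 :=
            Finset.single_le_sum (fun k _ => sq_nonneg ((A * Aᵀ) i k))
              (Finset.mem_univ i)
        _ = (A * Aᵀ) i i := hii.symm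
    have h0 : 0 ≤ (A * Aᵀ) i i := by
      rw [hs]; exact Finset.sum_nonneg fun j _ => hB0 i j
    nlinarith [h1, h0, hs.symm.trans_le (le_refl _)]
  set c : Fin n → ℝ := fun j => ∑ i, μ i * B i j with hcdef
  have htr : (Matrix.diagonal (fun i => (lam i)⁻¹) * A * Matrix.diagonal ℓ * Aᵀ).trace
      = ∑ j : Fin n, ℓ j * c j := by
    have hent : ∀ a b, (Matrix.diagonal (fun i => (lam i)⁻¹) * A * Matrix.diagonal ℓ) a b
        = μ a * A a b * ℓ b := by
      intro a b
      rw [Matrix.mul_diagonal, Matrix.diagonal_mul]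
    rw [Matrix.trace]
    simp only [Matrix.diag, Matrix.mul_apply, hent, Matrix.transpose_apply]
    rw [Finset.sum_comm]
    apply Finset.sum_congr rfl
    intro j _
    rw [hcdef, Finset.mul_sum]
    apply Finset.sum_congr rfl
    intro i _
    rw [hBdef]; ring
  rw [htr]
  have hLHS : ∑ i : Fin n, ℓ i / lam (Fin.castLE hnp i)
      = ∑ i : Fin n, ℓ i * μ (Fin.castLE hnp i) := by
    apply Finset.sum_congr rfl
    intro i _
    rw [hμdef, div_eq_mul_inv]
  rw [hLHS]
  -- reduce to Abel summation over ℕ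
  set w : ℕ → ℝ := fun i => if h : i < n then ℓ ⟨i, h⟩ else 0 with hwdef
  set g : ℕ → ℝ := fun i =>
    if h : i < n then c ⟨i, h⟩ - μ (Fin.castLE hnp ⟨i, h⟩) else 0 with hgdef
  have hIic : ∀ (f : Fin n → ℝ) (k : ℕ) (hk : k < n),
      ∑ j ∈ Finset.Iic (⟨k, hk⟩ : Fin n), f j
      = ∑ i ∈ Finset.range (k + 1), (fun i => if h : i < n then f ⟨i, h⟩ else 0) i := by
    intro f k hk
    apply Finset.sum_nbij' (fun (j : Fin n) => (j : ℕ))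
      (fun i => (⟨min i k, lt_of_le_of_lt (min_le_right _ _) hk⟩ : Fin n))
    · intro a ha
      rw [Finset.mem_Iic, Fin.le_def] at ha
      simp only [Fin.val_mk] at ha
      rw [Finset.mem_range]
      omega
    · intro a _
      rw [Finset.mem_Iic, Fin.le_def]
      simp
    · intro a ha
      rw [Finset.mem_Iic, Fin.le_def] at ha
      apply Fin.ext
      simpa using ha
    · intro a ha
      rw [Finset.mem_range] at ha
      simp only
      omega
    · intro a ha
      rw [Finset.mem_Iic, Fin.le_def] at ha
      simp only [a.isLt, dif_pos, Fin.eta]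
  have hdiff : 0 ≤ ∑ i ∈ Finset.range n, w i * g i := by
    apply abel_pos
    · intro i hi
      rw [hwdef]
      simp only [hi, dif_pos]
      exact hℓnonneg _
    · intro i hi
      have h1 : i < n := by omega
      rw [hwdef]
      simp only [hi, h1, dif_pos]
      exact hℓdec ⟨i, h1⟩ ⟨i + 1, hi⟩ (by rw [Fin.mk_le_mk]; omega)
    · intro k hk
      have hkey := key_partial n p hnp μ hμ B hB0 hcol hrow ⟨k, hk⟩
      have he : ∑ i ∈ Finset.range (k + 1), g i
          = ∑ j ∈ Finset.Iic (⟨k, hk⟩ : Fin n), (c j - μ (Fin.castLE hnp j)) := by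
        rw [hIic (fun j => c j - μ (Fin.castLE hnp j)) k hk]
      rw [he, Finset.sum_sub_distrib]
      have : ∑ j ∈ Finset.Iic (⟨k, hk⟩ : Fin n), c j
          = ∑ j ∈ Finset.Iic (⟨k, hk⟩ : Fin n), ∑ i, μ i * B i j := rfl
      rw [this]
      linarith [hkey]
  have hfin : ∑ j : Fin n, ℓ j * (c j - μ (Fin.castLE hnp j))
      = ∑ i ∈ Finset.range n, w i * g i := by
    rw [← Fin.sum_univ_eq_sum_range (fun i => w i * g i) n]
    apply Finset.sum_congr rfl
    intro j _
    rw [hwdef, hgdef]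
    simp only [j.isLt, dif_pos, Fin.eta]
  rw [← hfin] at hdiff
  have hexp : ∑ j : Fin n, ℓ j * (c j - μ (Fin.castLE hnp j))
      = ∑ j : Fin n, ℓ j * c j - ∑ j : Fin n, ℓ j * μ (Fin.castLE hnp j) := by
    rw [← Finset.sum_sub_distrib]
    apply Finset.sum_congr rfl
    intro j _
    ring
  rw [hexp] at hdiff
  linarith [hdiff]
end

section
/- Let λ_1 ≥ ... ≥ λ_p > 0 and ℓ_1 ≥ ... ≥ ℓ_n ≥ 0 with n ≤ p. The matrices M of size p×n with entries M_{ij} = ±δ_{ij} satisfy MᵀM = I_n and achieve tr(Λ⁻¹ M L Mᵀ) = ∑_{i=1}^n ℓ_i/λ_i, i.e., they attain the minimum of A ↦ tr(Λ⁻¹ A L Aᵀ) over all p×n matrices A with orthonormal columns. -/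
open Matrix Finset

lemma key_ineq (n p : ℕ) (hnp : n ≤ p) (c : Fin p → ℝ)
    (hcmono : ∀ i j : Fin p, i ≤ j → c i ≤ c j)
    (ℓ : Fin n → ℝ) (hℓ0 : ∀ j, 0 ≤ ℓ j) (hℓdec : ∀ i j : Fin n, i ≤ j → ℓ j ≤ ℓ i)
    (w : Fin p → Fin n → ℝ) (hw0 : ∀ i j, 0 ≤ w i j)
    (hcol : ∀ j, ∑ i, w i j = 1) (hrow : ∀ i, ∑ j, w i j ≤ 1) :
    ∑ j : Fin n, c (Fin.castLE hnp j) * ℓ j ≤ ∑ i, ∑ j, c i * ℓ j * w i j := by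
  set ℓ' : ℕ → ℝ := fun k => if h : k < n then ℓ ⟨k, h⟩ else 0 with hℓ'
  set d : ℕ → ℝ := fun k => ℓ' k - ℓ' (k + 1) with hd
  have hd0 : ∀ k, 0 ≤ d k := by
    intro k
    simp only [hd, hℓ', sub_nonneg]
    split_ifs with h1 h2
    · exact hℓdec ⟨k, h2⟩ ⟨k + 1, h1⟩ (by simp [Fin.le_def])
    · omega
    · exact hℓ0 _
    · exact le_refl 0
  have htel : ∀ j : Fin n, ℓ j = ∑ k ∈ Finset.range n, if (j : ℕ) ≤ k then d k else 0 := by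
    intro j
    have h1 : ∑ k ∈ Finset.range n, (if (j : ℕ) ≤ k then d k else 0)
        = ∑ k ∈ Finset.Ico (j : ℕ) n, d k := by
      rw [← Finset.sum_filter]
      congr 1
      ext k
      simp [Finset.mem_filter, Finset.mem_Ico, and_comm]
    rw [h1]
    have h2 : ∑ k ∈ Finset.Ico (j : ℕ) n, d k = ℓ' (j : ℕ) - ℓ' n := by
      rw [Finset.sum_Ico_eq_sub _ (le_of_lt j.isLt), Finset.sum_range_sub' ℓ', Finset.sum_range_sub' ℓ']
      ring
    rw [h2]
    simp [hℓ', j.isLt]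
  -- rewrite LHS
  have hL : ∑ j : Fin n, c (Fin.castLE hnp j) * ℓ j
      = ∑ k ∈ Finset.range n, d k * ∑ j : Fin n, (if (j : ℕ) ≤ k then c (Fin.castLE hnp j) else 0) := by
    calc ∑ j : Fin n, c (Fin.castLE hnp j) * ℓ j
        = ∑ j : Fin n, ∑ k ∈ Finset.range n, (if (j : ℕ) ≤ k then c (Fin.castLE hnp j) * d k else 0) := by
          refine Finset.sum_congr rfl fun j _ => ?_
          rw [htel j, Finset.mul_sum]
          exact Finset.sum_congr rfl fun k _ => by rw [mul_ite, mul_zero]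
      _ = ∑ k ∈ Finset.range n, ∑ j : Fin n, (if (j : ℕ) ≤ k then c (Fin.castLE hnp j) * d k else 0) :=
          Finset.sum_comm
      _ = ∑ k ∈ Finset.range n, d k * ∑ j : Fin n, (if (j : ℕ) ≤ k then c (Fin.castLE hnp j) else 0) := by
          refine Finset.sum_congr rfl fun k _ => ?_
          rw [Finset.mul_sum]
          exact Finset.sum_congr rfl fun j _ => by split_ifs <;> ring
  -- rewrite RHS
  have hR : ∑ i, ∑ j, c i * ℓ j * w i j
      = ∑ k ∈ Finset.range n, d k * ∑ i, c i * (∑ j : Fin n, if (j : ℕ) ≤ k then w i j else 0) := by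
    calc ∑ i, ∑ j, c i * ℓ j * w i j
        = ∑ i, ∑ k ∈ Finset.range n, ∑ j : Fin n, (if (j : ℕ) ≤ k then c i * d k * w i j else 0) := by
          refine Finset.sum_congr rfl fun i _ => ?_
          rw [← Finset.sum_comm]
          refine Finset.sum_congr rfl fun j _ => ?_
          rw [htel j, Finset.mul_sum, Finset.sum_mul]
          exact Finset.sum_congr rfl fun k _ => by split_ifs <;> ring
      _ = ∑ k ∈ Finset.range n, ∑ i, ∑ j : Fin n, (if (j : ℕ) ≤ k then c i * d k * w i j else 0) :=
          Finset.sum_comm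
      _ = ∑ k ∈ Finset.range n, d k * ∑ i, c i * (∑ j : Fin n, if (j : ℕ) ≤ k then w i j else 0) := by
          refine Finset.sum_congr rfl fun k _ => ?_
          rw [Finset.mul_sum]
          refine Finset.sum_congr rfl fun i _ => ?_
          rw [Finset.mul_sum, Finset.mul_sum]
          exact Finset.sum_congr rfl fun j _ => by split_ifs <;> ring
  rw [hL, hR]
  refine Finset.sum_le_sum fun k hk => ?_
  have hkn : k < n := Finset.mem_range.mp hk
  have hkp : k < p := lt_of_lt_of_le hkn hnp
  refine mul_le_mul_of_nonneg_left ?_ (hd0 k)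
  -- the core rearrangement bound at level k
  set m : Fin p → ℝ := fun i => ∑ j : Fin n, if (j : ℕ) ≤ k then w i j else 0 with hm
  have hm0 : ∀ i, 0 ≤ m i := fun i =>
    Finset.sum_nonneg fun j _ => by split_ifs; exacts [hw0 i j, le_refl 0]
  have hm1 : ∀ i, m i ≤ 1 := fun i =>
    le_trans (Finset.sum_le_sum fun j _ => by split_ifs; exacts [le_refl _, hw0 i j]) (hrow i)
  have hmsum : ∑ i, m i = ∑ j : Fin n, (if (j : ℕ) ≤ k then (1 : ℝ) else 0) := by
    rw [hm, Finset.sum_comm]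
    refine Finset.sum_congr rfl fun j _ => ?_
    by_cases h : (j : ℕ) ≤ k <;> simp [h, hcol j]
  -- range trick: sums over Fin n vs Fin p of functions supported on val ≤ k
  have range_trick : ∀ g : ℕ → ℝ, (∀ t, ¬ t ≤ k → g t = 0) →
      ∑ j : Fin n, g (j : ℕ) = ∑ i : Fin p, g (i : ℕ) := by
    intro g hg
    rw [Fin.sum_univ_eq_sum_range g n, Fin.sum_univ_eq_sum_range g p]
    refine Finset.sum_subset (Finset.range_subset_range.mpr hnp) fun t _ ht => ?_
    exact hg t (by simp only [Finset.mem_range] at ht ⊢; omega)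
  have hχ : ∑ j : Fin n, (if (j : ℕ) ≤ k then (1 : ℝ) else 0)
      = ∑ i : Fin p, (if (i : ℕ) ≤ k then (1 : ℝ) else 0) :=
    range_trick (fun t => if t ≤ k then (1 : ℝ) else 0) (fun t ht => if_neg ht)
  have hS : ∑ j : Fin n, (if (j : ℕ) ≤ k then c (Fin.castLE hnp j) else 0)
      = ∑ i : Fin p, (if (i : ℕ) ≤ k then c i else 0) := by
    have := range_trick (fun t => if h : t ≤ k then c ⟨t, lt_of_le_of_lt h hkp⟩ else 0)
      (fun t ht => dif_neg ht)
    calc ∑ j : Fin n, (if (j : ℕ) ≤ k then c (Fin.castLE hnp j) else 0)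
        = ∑ j : Fin n, (if h : (j : ℕ) ≤ k then c ⟨(j : ℕ), lt_of_le_of_lt h hkp⟩ else 0) := by
          refine Finset.sum_congr rfl fun j _ => ?_
          split_ifs <;> rfl
      _ = ∑ i : Fin p, (if h : (i : ℕ) ≤ k then c ⟨(i : ℕ), lt_of_le_of_lt h hkp⟩ else 0) := this
      _ = ∑ i : Fin p, (if (i : ℕ) ≤ k then c i else 0) := by
          refine Finset.sum_congr rfl fun i _ => ?_
          split_ifs <;> rfl
  rw [hS]
  -- pointwise pivot inequality
  set K : Fin p := ⟨k, hkp⟩ with hK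
  have hpt : ∀ i : Fin p,
      c K * (m i - (if (i : ℕ) ≤ k then (1 : ℝ) else 0))
        ≤ c i * m i - (if (i : ℕ) ≤ k then c i else 0) := by
    intro i
    by_cases h : (i : ℕ) ≤ k
    · simp only [if_pos h]
      have hci : c i ≤ c K := hcmono i K (by simp [Fin.le_def, hK, h])
      have := mul_le_mul_of_nonpos_right hci (by linarith [hm1 i] : m i - 1 ≤ 0)
      nlinarith
    · simp only [if_neg h]
      have hci : c K ≤ c i := hcmono K i (by simp [Fin.le_def, hK]; omega)
      have := mul_le_mul_of_nonneg_right hci (hm0 i)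
      nlinarith
  have hsum := Finset.sum_le_sum fun i (_ : i ∈ Finset.univ) => hpt i
  rw [← Finset.mul_sum, Finset.sum_sub_distrib, Finset.sum_sub_distrib] at hsum
  have hzero : ∑ i, m i - ∑ i : Fin p, (if (i : ℕ) ≤ k then (1 : ℝ) else 0) = 0 := by
    rw [hmsum, hχ]; ring
  rw [hzero, mul_zero] at hsum
  linarith

lemma trace_eq (n p : ℕ) (c : Fin p → ℝ) (ℓ : Fin n → ℝ) (A : Matrix (Fin p) (Fin n) ℝ) :
    (Matrix.diagonal c * A * Matrix.diagonal ℓ * Aᵀ).trace = ∑ i, ∑ j, c i * ℓ j * (A i j)^2 := by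
  simp only [Matrix.trace, Matrix.diag, Matrix.mul_apply, Matrix.diagonal_apply,
    Matrix.transpose_apply, ite_mul, mul_ite, zero_mul, mul_zero, Finset.sum_ite_eq,
    Finset.sum_ite_eq', Finset.mem_univ, if_true]
  refine Finset.sum_congr rfl fun i _ => Finset.sum_congr rfl fun j _ => by ring


/-- Sign matrices `M` with `M_{ij} = ±δ_{ij}` have orthonormal columns and attain
the minimum of `A ↦ tr(Λ⁻¹ A L Aᵀ)`, the minimum value being `∑ ℓ_i/λ_i`. -/
theorem stmt_6 (n p : ℕ) (hnp : n ≤ p)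
    (lam : Fin p → ℝ) (hlampos : ∀ i, 0 < lam i)
    (hlamdec : ∀ i j : Fin p, i ≤ j → lam j ≤ lam i)
    (ℓ : Fin n → ℝ) (hℓnonneg : ∀ i, 0 ≤ ℓ i)
    (hℓdec : ∀ i j : Fin n, i ≤ j → ℓ j ≤ ℓ i)
    (ε : Fin n → ℝ) (hε : ∀ j, ε j = 1 ∨ ε j = -1)
    (M : Matrix (Fin p) (Fin n) ℝ)
    (hM : ∀ i j, M i j = if (i : ℕ) = (j : ℕ) then ε j else 0) :
    Mᵀ * M = 1 ∧
    (Matrix.diagonal (fun i => (lam i)⁻¹) * M * Matrix.diagonal ℓ * Mᵀ).trace =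
      ∑ i : Fin n, ℓ i / lam (Fin.castLE hnp i) ∧
    (∀ A : Matrix (Fin p) (Fin n) ℝ, Aᵀ * A = 1 →
      (Matrix.diagonal (fun i => (lam i)⁻¹) * M * Matrix.diagonal ℓ * Mᵀ).trace ≤
        (Matrix.diagonal (fun i => (lam i)⁻¹) * A * Matrix.diagonal ℓ * Aᵀ).trace) := by
  have hε2 : ∀ j, ε j ^ 2 = 1 := by
    intro j; rcases hε j with h | h <;> rw [h] <;> norm_num
  -- Part 1
  have part1 : Mᵀ * M = 1 := by
    ext j j'
    rw [Matrix.mul_apply, Matrix.one_apply]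
    simp only [Matrix.transpose_apply, hM]
    rw [Finset.sum_eq_single (Fin.castLE hnp j)]
    · have hcj : ((Fin.castLE hnp j : Fin p) : ℕ) = (j : ℕ) := rfl
      rw [hcj, if_pos rfl]
      by_cases h : j = j'
      · subst h
        rw [if_pos rfl, if_pos rfl, ← sq, hε2]
      · rw [if_neg h, if_neg (fun hh => h (Fin.val_injective hh)), mul_zero]
    · intro i _ hi
      rw [if_neg, zero_mul]
      intro hv
      exact hi (Fin.ext hv)
    · intro h; exact absurd (Finset.mem_univ _) h
  -- Part 2
  have part2 : (Matrix.diagonal (fun i => (lam i)⁻¹) * M * Matrix.diagonal ℓ * Mᵀ).trace =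
      ∑ i : Fin n, ℓ i / lam (Fin.castLE hnp i) := by
    rw [trace_eq, Finset.sum_comm]
    refine Finset.sum_congr rfl fun j _ => ?_
    rw [Finset.sum_eq_single (Fin.castLE hnp j)]
    · have hcj : ((Fin.castLE hnp j : Fin p) : ℕ) = (j : ℕ) := rfl
      rw [hM, hcj, if_pos rfl, hε2, mul_one]
      exact (div_eq_inv_mul _ _).symm
    · intro i _ hi
      have hne : (i : ℕ) ≠ (j : ℕ) := fun hv => hi (Fin.ext hv)
      rw [hM, if_neg hne]
      ring
    · intro h; exact absurd (Finset.mem_univ _) h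
  refine ⟨part1, part2, ?_⟩
  intro A hA
  rw [part2, trace_eq]
  have hcol : ∀ j, ∑ i, (A i j)^2 = 1 := by
    intro j
    have h := congrFun (congrFun hA j) j
    simp only [Matrix.mul_apply, Matrix.transpose_apply, Matrix.one_apply_eq] at h
    rw [← h]
    exact Finset.sum_congr rfl fun i _ => (sq (A i j)).symm ▸ rfl
  have hrow : ∀ i, ∑ j, (A i j)^2 ≤ 1 := by
    intro i
    set P := A * Aᵀ with hPdef
    have hP : P * P = P := by
      rw [hPdef, Matrix.mul_assoc, ← Matrix.mul_assoc Aᵀ, hA, Matrix.one_mul]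
    have hPsymm : ∀ a b, P b a = P a b := by
      intro a b
      simp [hPdef, Matrix.mul_apply, Matrix.transpose_apply, mul_comm]
    have hPii : P i i = ∑ k, (P i k)^2 := by
      conv_lhs => rw [← hP]
      rw [Matrix.mul_apply]
      exact Finset.sum_congr rfl fun k _ => by rw [hPsymm i k, sq]
    have hPval : P i i = ∑ j, (A i j)^2 := by
      rw [hPdef, Matrix.mul_apply]
      exact Finset.sum_congr rfl fun j _ => by rw [Matrix.transpose_apply, sq]
    have hsq : (P i i)^2 ≤ P i i := by
      conv_rhs => rw [hPii]
      exact Finset.single_le_sum (f := fun k => (P i k)^2) (fun k _ => sq_nonneg _) (Finset.mem_univ i)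
    have h0 : 0 ≤ P i i := by
      rw [hPval]; exact Finset.sum_nonneg fun j _ => sq_nonneg _
    nlinarith [hPval ▸ hsq]
  have := key_ineq n p hnp (fun i => (lam i)⁻¹)
    (fun i j hij => inv_anti₀ (hlampos j) (hlamdec i j hij))
    ℓ hℓnonneg hℓdec (fun i j => (A i j)^2) (fun i j => sq_nonneg _) hcol hrow
  calc ∑ i : Fin n, ℓ i / lam (Fin.castLE hnp i)
      = ∑ j : Fin n, (fun i => (lam i)⁻¹) (Fin.castLE hnp j) * ℓ j := by
        refine Finset.sum_congr rfl fun j _ => ?_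
        rw [div_eq_inv_mul]
    _ ≤ _ := this
end

section
/- Any exact solution λ ∈ ℝ₊₊^p of the likelihood equations n λ_i = ℓ_i - (1/p)∑_{b=1}^n (ℓ_i-ℓ_b)/(1 + (1/p)((λ_i-λ_b)/(λ_iλ_b))(ℓ_i-ℓ_b)) - (ℓ_i/p)∑_{r=n+1}^p 1/(1 + (1/p)((λ_i-λ_r)/(λ_iλ_r))ℓ_i), with ℓ_j = 0 for j > n, satisfies the trace condition n ∑_{i=1}^p λ_i = ∑_{a=1}^n ℓ_a. -/
/-- Any exact positive solution of the likelihood equations satisfies the trace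
condition `n ∑ λ_i = ∑ ℓ_a`. -/
theorem stmt_8 (n p : ℕ) (hn : 1 ≤ n) (hnp : n ≤ p) (ℓ : ℕ → ℝ)
    (hpos : ∀ a < n, 0 < ℓ a)
    (hdec : ∀ a b, a < b → b < n → ℓ b < ℓ a)
    (hzero : ∀ j, n ≤ j → ℓ j = 0)
    (lam : ℕ → ℝ) (hlampos : ∀ i < p, 0 < lam i)
    (hden : ∀ i < p, ∀ j < p,
      1 + (1 / p) * ((lam i - lam j) / (lam i * lam j)) * (ℓ i - ℓ j) ≠ 0)
    (heq : ∀ i < p, (n : ℝ) * lam i =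
      ℓ i - (1 / p) * ∑ b ∈ Finset.range n,
          (ℓ i - ℓ b) / (1 + (1 / p) * ((lam i - lam b) / (lam i * lam b)) * (ℓ i - ℓ b))
        - (ℓ i / p) * ∑ r ∈ Finset.Ico n p,
          1 / (1 + (1 / p) * ((lam i - lam r) / (lam i * lam r)) * ℓ i)) :
    (n : ℝ) * ∑ i ∈ Finset.range p, lam i = ∑ a ∈ Finset.range n, ℓ a := by
  set F : ℕ → ℕ → ℝ := fun i j =>
    (ℓ i - ℓ j) / (1 + (1 / p) * ((lam i - lam j) / (lam i * lam j)) * (ℓ i - ℓ j)) with hF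
  -- antisymmetry of F
  have h2 : ∀ i j : ℕ, F j i = -(F i j) := by
    intro i j
    have hd : (1 + (1 / p : ℝ) * ((lam j - lam i) / (lam j * lam i)) * (ℓ j - ℓ i))
        = (1 + (1 / p) * ((lam i - lam j) / (lam i * lam j)) * (ℓ i - ℓ j)) := by
      ring
    simp only [hF]
    rw [hd, ← neg_div, neg_sub]
  -- the double sum vanishes
  have hS : ∑ i ∈ Finset.range p, ∑ j ∈ Finset.range p, F i j = 0 := by
    have h1 : ∑ i ∈ Finset.range p, ∑ j ∈ Finset.range p, F i j
        = ∑ j ∈ Finset.range p, ∑ i ∈ Finset.range p, F i j := Finset.sum_comm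
    have h3 : ∑ j ∈ Finset.range p, ∑ i ∈ Finset.range p, F i j
        = -∑ i ∈ Finset.range p, ∑ j ∈ Finset.range p, F i j := by
      rw [← Finset.sum_neg_distrib]
      apply Finset.sum_congr rfl
      intro j _
      rw [← Finset.sum_neg_distrib]
      apply Finset.sum_congr rfl
      intro i _
      rw [h2 j i]
    linarith [h1, h3]
  -- rewrite each equation as ℓ i minus (1/p) times a full-range sum of F
  have key : ∀ i ∈ Finset.range p, (n : ℝ) * lam i =
      ℓ i - (1 / p) * ∑ j ∈ Finset.range p, F i j := by
    intro i hi
    rw [Finset.mem_range] at hi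
    rw [heq i hi, ← Finset.sum_range_add_sum_Ico (F i) hnp]
    have hIco : ∑ r ∈ Finset.Ico n p, F i r
        = ∑ r ∈ Finset.Ico n p,
            ℓ i * (1 / (1 + (1 / p) * ((lam i - lam r) / (lam i * lam r)) * ℓ i)) := by
      apply Finset.sum_congr rfl
      intro r hr
      simp only [hF]
      rw [hzero r (Finset.mem_Ico.mp hr).1]
      ring
    rw [hIco, ← Finset.mul_sum]
    simp only [hF]
    ring
  have hsum := Finset.sum_congr rfl key
  rw [Finset.mul_sum]
  rw [hsum, Finset.sum_sub_distrib, ← Finset.mul_sum, hS, mul_zero, sub_zero,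
    ← Finset.sum_range_add_sum_Ico ℓ hnp]
  rw [Finset.sum_congr rfl (fun r hr => hzero r (Finset.mem_Ico.mp hr).1)]
  simp
end

section
/- Fix ℓ_1 > ... > ℓ_n > 0, ℓ_j = 0 for j > n, and p ≥ n. The function ℒ'(λ) = -n∑_{i=1}^p ln λ_i - ∑_{a=1}^n ℓ_a/λ_a - (1/p)∑_{1≤a<b≤n} ((λ_a-λ_b)/(λ_aλ_b))(ℓ_a-ℓ_b) - (1/p)∑_{1≤a≤n<r≤p} ((λ_a-λ_r)/(λ_aλ_r))ℓ_a on ℝ₊₊^p has a critical point at the constant vector λ_i = (∑_{a=1}^n ℓ_a)/(np) for all i. -/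
/-!
With `μ_i = 1 / λ_i` the pair term of `ℒ'` is `-∑_{i<j} (μ_i - μ_j)(ℓ_i - ℓ_j)`, and Lagrange's
identity `∑_{i<j} (μ_i - μ_j)(ℓ_i - ℓ_j) = p ∑ ℓ_i μ_i - (∑ ℓ_i)(∑ μ_i)` makes the `∑ ℓ_i μ_i`
parts cancel. So wherever all `λ_i ≠ 0`, `ℒ'` is the separable function
`∑_i (-n log λ_i - (S / p) / λ_i)` with `S = ∑ ℓ_a`, and `t ↦ -n log t - (S / p) / t` is
critical at `t = S / (n p)`.
-/

open Real Filter Topology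

theorem sum_sum_ite_lt_add_self_of_symm {ι R : Type*} [Fintype ι] [LinearOrder ι]
    [AddCommMonoid R] (F : ι → ι → R) (hF : ∀ i j, F i j = F j i) (hF0 : ∀ i, F i i = 0) :
    (∑ i, ∑ j, if i < j then F i j else 0) + (∑ i, ∑ j, if i < j then F i j else 0) =
      ∑ i, ∑ j, F i j := by
  nth_rw 2 [Finset.sum_comm]
  rw [← Finset.sum_add_distrib]
  refine Finset.sum_congr rfl fun i _ => ?_
  rw [← Finset.sum_add_distrib]
  refine Finset.sum_congr rfl fun j _ => ?_
  rcases lt_trichotomy i j with h | rfl | h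
  · simp [h, h.not_gt]
  · simp [hF0]
  · simp [h, h.not_gt, hF]

theorem sum_sum_ite_lt_sub_mul_sub {ι K : Type*} [Fintype ι] [LinearOrder ι] [Field K]
    [CharZero K] (x y : ι → K) :
    (∑ i, ∑ j, if i < j then (x i - x j) * (y i - y j) else 0) =
      Fintype.card ι * ∑ i, x i * y i - (∑ i, x i) * ∑ i, y i := by
  have h := sum_sum_ite_lt_add_self_of_symm (fun i j => (x i - x j) * (y i - y j))
    (fun i j => by ring) (fun i => by ring)
  have hfull : ∑ i, ∑ j, (x i - x j) * (y i - y j) =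
      2 * (Fintype.card ι * ∑ i, x i * y i - (∑ i, x i) * ∑ i, y i) := by
    simp only [fun i j => show (x i - x j) * (y i - y j) =
        x i * y i - x i * y j - x j * y i + x j * y j by ring, Finset.sum_add_distrib, Finset.sum_sub_distrib, ← Finset.mul_sum, ← Finset.sum_mul,
      Finset.sum_const, Finset.card_univ, nsmul_eq_mul]
    simp only [mul_left_comm (x _), ← Finset.mul_sum]
    ring
  rw [hfull, ← two_mul] at h
  exact mul_left_cancel₀ two_ne_zero h

theorem sum_sum_ite_lt_div_mul_sub {ι K : Type*} [Fintype ι] [LinearOrder ι] [Field K]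
    [CharZero K] (v x : ι → K) (hv : ∀ i, v i ≠ 0) :
    (∑ i, ∑ j, if i < j then (v i - v j) / (v i * v j) * (x i - x j) else 0) =
      (∑ i, x i) * (∑ i, (v i)⁻¹) - Fintype.card ι * ∑ i, x i / v i := by
  have hterm : ∀ i j, (if i < j then (v i - v j) / (v i * v j) * (x i - x j) else 0) =
      -(if i < j then ((v i)⁻¹ - (v j)⁻¹) * (x i - x j) else 0) := by
    intro i j
    split_ifs
    · field_simp [hv i, hv j]
      ring
    · simp
  simp_rw [hterm, Finset.sum_neg_distrib, sum_sum_ite_lt_sub_mul_sub, div_eq_mul_inv,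
    mul_comm (x _)]
  ring

theorem hasFDerivAt_sum_apply_const_of_hasDerivAt_zero {ι 𝕜 : Type*} [Fintype ι]
    [NontriviallyNormedField 𝕜] {h : 𝕜 → 𝕜} {c : 𝕜} (hh : HasDerivAt h 0 c) :
    HasFDerivAt (fun v : ι → 𝕜 => ∑ i, h (v i)) (0 : (ι → 𝕜) →L[𝕜] 𝕜) fun _ => c := by
  have hcoord (i : ι) :
      HasFDerivAt (fun v : ι → 𝕜 => h (v i)) (0 : (ι → 𝕜) →L[𝕜] 𝕜) fun _ => c := by
    have hproj := (ContinuousLinearMap.proj (R := 𝕜) (φ := fun _ : ι => 𝕜) i).hasFDerivAt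
      (x := fun _ => c)
    exact (hh.comp_hasFDerivAt (fun _ : ι => c) hproj).congr_fderiv (by ext; simp)
  simpa using HasFDerivAt.fun_sum (u := Finset.univ) fun i _ => hcoord i

theorem hasDerivAt_neg_mul_log_sub_mul_inv {a b : ℝ} (ha : a ≠ 0) (hb : b ≠ 0) :
    HasDerivAt (fun t => -a * log t - b * t⁻¹) 0 (b / a) := by
  have hba : b / a ≠ 0 := div_ne_zero hb ha
  refine (((hasDerivAt_log hba).const_mul (-a)).sub
    ((hasDerivAt_inv hba).const_mul b)).congr_deriv ?_
  field_simp
  ring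

theorem stmt_9_general (n p : ℕ) (hn : 1 ≤ n) (hnp : n ≤ p) (ℓ : ℕ → ℝ)
    (hpos : ∀ a < n, 0 < ℓ a)
    (ℓ' : Fin p → ℝ) (hℓ' : ∀ i : Fin p, ℓ' i = if (i : ℕ) < n then ℓ i else 0)
    (f : (Fin p → ℝ) → ℝ)
    (hf : ∀ v : Fin p → ℝ, f v =
      -(n : ℝ) * ∑ i, Real.log (v i) - ∑ i, ℓ' i / v i
        - (1 / p) * ∑ i : Fin p, ∑ j : Fin p,
            if (i : ℕ) < (j : ℕ) then ((v i - v j) / (v i * v j)) * (ℓ' i - ℓ' j) else 0) :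
    fderiv ℝ f (fun _ => (∑ a ∈ Finset.range n, ℓ a) / (n * p)) = 0 := by
  set S := ∑ a ∈ Finset.range n, ℓ a
  have hS : 0 < S := Finset.sum_pos (fun a ha => hpos a (Finset.mem_range.mp ha)) ⟨0, by simpa⟩
  have hp : (p : ℝ) ≠ 0 := by exact_mod_cast (Nat.lt_of_lt_of_le hn hnp).ne'
  have hn0 : (n : ℝ) ≠ 0 := by exact_mod_cast (Nat.one_le_iff_ne_zero.mp hn)
  have hsum : ∑ i, ℓ' i = S := by
    simp only [hℓ']
    rw [Fin.sum_univ_eq_sum_range (fun i => if i < n then ℓ i else 0), ← Finset.sum_filter]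
    congr 1
    ext a
    simp only [Finset.mem_filter, Finset.mem_range]
    omega
  have hc : S / (n * p) = S / p / n := by ring
  have hfg : f =ᶠ[𝓝 fun _ => S / (n * p)]
      fun v => ∑ i, (-(n : ℝ) * log (v i) - S / p * (v i)⁻¹) := by
    have hne : ∀ᶠ v : Fin p → ℝ in 𝓝 fun _ => S / (n * p), ∀ i, v i ≠ 0 :=
      eventually_all.mpr fun i => (continuous_apply i).continuousAt.eventually_ne (by positivity)
    filter_upwards [hne] with v hv
    simp only [hf, Fin.val_fin_lt, sum_sum_ite_lt_div_mul_sub v ℓ' hv]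
    rw [hsum, Fintype.card_fin, Finset.sum_sub_distrib, ← Finset.mul_sum, ← Finset.mul_sum]
    field_simp
    ring
  rw [hfg.fderiv_eq, hc]
  exact (hasFDerivAt_sum_apply_const_of_hasDerivAt_zero
    (hasDerivAt_neg_mul_log_sub_mul_inv hn0 (by positivity))).fderiv

/-- The linearized adjusted log-likelihood `ℒ'` has a critical point at the
constant vector `λ_i = (∑ ℓ_a)/(np)`. -/
theorem stmt_9 (n p : ℕ) (hn : 1 ≤ n) (hnp : n ≤ p) (ℓ : ℕ → ℝ)
    (hpos : ∀ a < n, 0 < ℓ a)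
    (hdec : ∀ a b, a < b → b < n → ℓ b < ℓ a)
    (ℓ' : Fin p → ℝ) (hℓ' : ∀ i : Fin p, ℓ' i = if (i : ℕ) < n then ℓ i else 0)
    (f : (Fin p → ℝ) → ℝ)
    (hf : ∀ v : Fin p → ℝ, f v =
      -(n : ℝ) * ∑ i, Real.log (v i) - ∑ i, ℓ' i / v i
        - (1 / p) * ∑ i : Fin p, ∑ j : Fin p,
            if (i : ℕ) < (j : ℕ) then ((v i - v j) / (v i * v j)) * (ℓ' i - ℓ' j) else 0) :
    fderiv ℝ f (fun _ => (∑ a ∈ Finset.range n, ℓ a) / (n * p)) = 0 :=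
  stmt_9_general n p hn hnp ℓ hpos ℓ' hℓ' f hf
end
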